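/- A word w over Σ is CR-poor if and only if every closed factor of w is a complete return to a power of a single letter (i.e., every nonempty closed factor has the form a^n or a complete return to a^n for a letter a). -/

import Mathlib

variable {α : Type*}

/-- `u` is a factor (contiguous subword) of `w`. -/
def IsFactor (u w : List α) : Prop := ∃ v z : List α, w = v ++ u ++ z

/-- `u` is a border of `w`: a word different from `w` that is both a prefix and a suffix. -/
def IsBorder (u w : List α) : Prop := u ≠ w ∧ u <+: w ∧ u <:+ w

/-- `u` has an internal occurrence in `w`. -/
def HasInternalOcc (u w : List α) : Prop :=
  ∃ v z : List α, v ≠ [] ∧ z ≠ [] ∧ w = v ++ u ++ z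

/-- A word is closed if it is empty or has a border with no internal occurrence. -/
def ClosedWord (w : List α) : Prop :=
  w = [] ∨ ∃ u : List α, IsBorder u w ∧ ¬ HasInternalOcc u w

/-- The set of closed factors of `w`. -/
def closedFactors (w : List α) : Set (List α) := {u | IsFactor u w ∧ ClosedWord u}

/-- A word is CR-poor if it has exactly `|w| + 1` closed factors. -/
def IsCRPoor (w : List α) : Prop := (closedFactors w).ncard = w.length + 1

/-- `w` is a complete return to `u`: exactly two occurrences of `u` in `w`,
one as a prefix and one as a suffix. -/
def IsCompleteReturn (u w : List α) : Prop :=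
  u <+: w ∧ u <:+ w ∧ {i : ℕ | i + u.length ≤ w.length ∧ u <+: w.drop i}.ncard = 2

/-- The set of palindromic factors of `w`. -/
def palFactors (w : List α) : Set (List α) := {u | IsFactor u w ∧ u.reverse = u}

/-- `k`-fold concatenation power of a word. -/
def listPow (u : List α) : ℕ → List α
  | 0 => []
  | k + 1 => u ++ listPow u k

/-- A word is primitive if it is nonempty and not a power `u^k` with `k ≥ 2`. -/
def Primitive (v : List α) : Prop :=
  v ≠ [] ∧ ∀ (u : List α) (k : ℕ), 2 ≤ k → v ≠ listPow u k

/-- `p` is a period of `w`. -/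
def HasPeriod (w : List α) (p : ℕ) : Prop := 0 < p ∧ p ≤ w.length ∧ w.drop p <+: w


/-!
Appending a letter `c` to `w` creates exactly the closed suffixes of `w ++ [c]` that are not
factors of `w`, and there is always one: if `v` is the longest suffix of `w ++ [c]` occurring in
`w`, the suffix starting at the last non-final occurrence of `v` is a complete return to `v`.
Hence `|C(w)| ≥ |w| + 1`, with equality iff every prefix extension creates exactly one new closed
suffix. A new closed suffix occurs only at the end of `w ++ [c]`, so of two of them the shorter
occurs in the longer only as a suffix; this is impossible when both are letter powers or complete
returns to letter powers. Conversely, a new closed suffix `u` not of this form forces a second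
one: either the return to `v` differs from `u`, or `u` is that return, `v = b :: v'` with `v'`
not a prefix of `v`, and the return to `v'` is another new closed suffix.
-/

def OccursAt (u w : List α) (i : ℕ) : Prop := i + u.length ≤ w.length ∧ u <+: w.drop i

open List

section Occurrences

variable {u w : List α} {i : ℕ}

theorem isFactor_iff_infix : IsFactor u w ↔ u <:+: w :=
  ⟨fun ⟨v, z, h⟩ => ⟨v, z, h.symm⟩, fun ⟨v, z, h⟩ => ⟨v, z, h.symm⟩⟩

theorem occursAt_zero_iff : OccursAt u w 0 ↔ u <+: w := by
  simpa [OccursAt] using IsPrefix.length_le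

theorem occursAt_of_suffix (h : u <:+ w) : OccursAt u w (w.length - u.length) := by
  have := h.length_le
  refine ⟨by omega, ?_⟩
  rw [← suffix_iff_eq_drop.1 h]

theorem exists_occursAt_of_infix (h : u <:+: w) : ∃ i, OccursAt u w i := by
  obtain ⟨v, z, rfl⟩ := h
  exact ⟨v.length, by simp, by simp⟩

theorem OccursAt.of_prefix {v : List α} (h : OccursAt u w i) (hv : v <+: u) : OccursAt v w i :=
  ⟨by have := hv.length_le; have := h.1; omega, hv.trans h.2⟩

theorem OccursAt.append_right (h : OccursAt u w i) (z : List α) : OccursAt u (w ++ z) i := by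
  have := h.1
  refine ⟨by rw [length_append]; omega, ?_⟩
  rw [drop_append_of_le_length (by omega)]
  exact h.2.trans (prefix_append _ _)

theorem OccursAt.infix_take {n : ℕ} (h : OccursAt u w i) (hn : i + u.length ≤ n) :
    u <:+: w.take n := by
  have hpre : u <+: (w.take n).drop i := by
    rw [drop_take, prefix_take_iff]
    exact ⟨h.2, by omega⟩
  exact hpre.isInfix.trans (drop_suffix _ _).isInfix

theorem occursAt_drop_iff {p j : ℕ} (hp : p ≤ w.length) :
    OccursAt u (w.drop p) j ↔ OccursAt u w (p + j) := by
  simp only [OccursAt, length_drop, drop_drop]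
  exact and_congr_left' (by omega)

theorem OccursAt.tail {a : α} (h : OccursAt (a :: u) w i) : OccursAt u w (i + 1) := by
  have := h.1
  refine ⟨by rw [length_cons] at this; omega, ?_⟩
  rw [← tail_drop]
  obtain ⟨r, hr⟩ := h.2
  exact ⟨r, by rw [← hr]; rfl⟩

end Occurrences

section CompleteReturn

variable {u t : List α}

theorem isCompleteReturn_iff : IsCompleteReturn u t ↔ u <+: t ∧ u <:+ t ∧
    u.length < t.length ∧ ∀ i, OccursAt u t i → i = 0 ∨ i + u.length = t.length := by
  have hocc0 : u <+: t → OccursAt u t 0 := occursAt_zero_iff.2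
  constructor
  · rintro ⟨hpre, hsuf, hcard⟩
    obtain ⟨i, j, hij, hset⟩ := Set.ncard_eq_two.1 hcard
    have hmem : ∀ k, OccursAt u t k ↔ k = i ∨ k = j := fun k => Set.ext_iff.1 hset k
    have h0 := (hmem 0).1 (hocc0 hpre)
    have he := (hmem _).1 (occursAt_of_suffix hsuf)
    have hi := ((hmem i).2 (Or.inl rfl)).1
    have hj := ((hmem j).2 (Or.inr rfl)).1
    refine ⟨hpre, hsuf, by omega, fun k hk => ?_⟩
    have := hk.1
    rcases (hmem k).1 hk with rfl | rfl <;> omega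
  · rintro ⟨hpre, hsuf, hlt, hocc⟩
    refine ⟨hpre, hsuf, Set.ncard_eq_two.2 ⟨0, t.length - u.length, by omega, ?_⟩⟩
    ext k
    simp only [Set.mem_ofPred_eq, Set.mem_insert_iff, Set.mem_singleton_iff]
    constructor
    · intro hk
      have := hk.1
      exact (hocc k hk).imp_right (by omega)
    · rintro (rfl | rfl)
      exacts [hocc0 hpre, occursAt_of_suffix hsuf]

theorem IsCompleteReturn.closedWord (h : IsCompleteReturn u t) : ClosedWord t := by
  obtain ⟨hpre, hsuf, hlt, hocc⟩ := isCompleteReturn_iff.1 h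
  refine Or.inr ⟨u, ⟨by rintro rfl; omega, hpre, hsuf⟩, ?_⟩
  rintro ⟨v, z, hv, hz, rfl⟩
  have := hocc v.length ⟨by simp, by simp⟩
  simp only [length_append] at this
  have := length_pos_iff.2 hv
  have := length_pos_iff.2 hz
  omega

theorem exists_isCompleteReturn_drop {x : List α} {i : ℕ} (hu : u <:+ x) (hi : OccursAt u x i)
    (hlt : i + u.length < x.length) :
    ∃ p, i ≤ p ∧ p + u.length < x.length ∧ IsCompleteReturn u (x.drop p) := by
  classical
  let P k := OccursAt u x k ∧ k + u.length < x.length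
  have hix : i ≤ x.length := by omega
  obtain ⟨hp, hplt⟩ : P (Nat.findGreatest P x.length) := Nat.findGreatest_spec hix ⟨hi, hlt⟩
  set p := Nat.findGreatest P x.length
  refine ⟨p, Nat.le_findGreatest hix ⟨hi, hlt⟩, hplt,
    isCompleteReturn_iff.2 ⟨hp.2, ?_, by rw [length_drop]; omega, fun j hj => ?_⟩⟩
  · exact suffix_of_suffix_length_le hu (drop_suffix p x) (by rw [length_drop]; omega)
  rw [occursAt_drop_iff (by omega)] at hj
  by_cases hfin : p + j + u.length < x.length
  · have : p + j ≤ p := Nat.le_findGreatest (by omega) ⟨hj, hfin⟩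
    omega
  · have := hj.1
    simp only [length_drop]
    omega

end CompleteReturn

def IsLetterPowerReturn (u : List α) : Prop :=
  ∃ (a : α) (n : ℕ), u = replicate n a ∨ (0 < n ∧ IsCompleteReturn (replicate n a) u)

section LetterPowers

variable {a b : α} {m n : ℕ} {s t : List α}

theorem prefix_of_suffix_replicate (h : s <:+ replicate n a) : s <+: replicate n a :=
  prefix_replicate_iff.2 (suffix_replicate_iff.1 h)

theorem replicate_suffix_replicate (h : m ≤ n) : replicate m a <:+ replicate n a :=
  suffix_replicate_iff.2 ⟨by simpa using h, by simp⟩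

theorem eq_of_replicate_suffix (ha : replicate m a <:+ s) (hb : replicate n b <:+ s) (hm : 0 < m)
    (hn : 0 < n) : a = b := by
  have hma : replicate m a ≠ [] := by simpa using hm.ne'
  have hnb : replicate n b ≠ [] := by simpa using hn.ne'
  simpa using (ha.getLast hma).trans (hb.getLast hnb).symm

theorem cons_eq_replicate_of_prefix_cons {l : List α} (h : l <+: a :: l) :
    a :: l = replicate (l.length + 1) a := by
  induction l generalizing a with
  | nil => rfl
  | cons b l ih =>
    obtain ⟨rfl, hl⟩ := cons_prefix_cons.1 h
    rw [ih hl, length_replicate]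
    rfl

theorem IsCompleteReturn.not_replicate_succ_suffix (h : IsCompleteReturn (replicate n a) t)
    (hn : n + 1 < t.length) : ¬ replicate (n + 1) a <:+ t := by
  intro hsuf
  have hocc := (occursAt_of_suffix hsuf).of_prefix
    (prefix_replicate_iff.2 ⟨by simp, by simp⟩ : replicate n a <+: replicate (n + 1) a)
  have := (isCompleteReturn_iff.1 h).2.2.2 _ hocc
  simp only [length_replicate] at this
  omega

theorem eq_of_suffix_of_forall_occursAt (hs : IsLetterPowerReturn s) (ht : IsLetterPowerReturn t)
    (hst : s <:+ t) (hocc : ∀ i, OccursAt s t i → i + s.length = t.length) : s = t := by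
  by_contra hne
  have hlt : s.length < t.length :=
    lt_of_le_of_ne hst.length_le fun h => hne (hst.eq_of_length h)
  have hnpre : ¬ s <+: t := fun h => by have := hocc 0 (occursAt_zero_iff.2 h); omega
  obtain ⟨a, n, rfl | ⟨hn, hcr⟩⟩ := ht
  · exact hnpre (prefix_of_suffix_replicate hst)
  obtain ⟨hpre, hsuf, -, honly⟩ := isCompleteReturn_iff.1 hcr
  rcases le_or_gt s.length n with hsn | hns
  · exact hnpre ((prefix_of_suffix_replicate
      (suffix_of_suffix_length_le hst hsuf (by simpa using hsn))).trans hpre)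
  have hPs : replicate n a <:+ s :=
    suffix_of_suffix_length_le hsuf hst (by rw [length_replicate]; omega)
  obtain ⟨b, m, rfl | ⟨hm, hscr⟩⟩ := hs
  · simp only [length_replicate] at hns hlt
    obtain rfl := eq_of_replicate_suffix hPs (suffix_refl _) hn (by omega)
    exact hcr.not_replicate_succ_suffix (by omega)
      ((replicate_suffix_replicate (by omega)).trans hst)
  obtain ⟨hQpre, hQs, -⟩ := isCompleteReturn_iff.1 hscr
  obtain rfl := eq_of_replicate_suffix hPs hQs hn hm
  rcases lt_trichotomy m n with hmn | rfl | hnm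
  · exact hscr.not_replicate_succ_suffix (by omega)
      ((replicate_suffix_replicate (by omega)).trans hPs)
  · have := honly _ ((occursAt_of_suffix hst).of_prefix hQpre)
    simp only [length_replicate] at this
    omega
  · exact hcr.not_replicate_succ_suffix (by omega)
      (((replicate_suffix_replicate (by omega)).trans hQs).trans hst)

theorem IsCompleteReturn.exists_eq_cons_not_prefix {v : List α}
    (hcr : IsCompleteReturn v t) (ht : ¬ IsLetterPowerReturn t) :
    ∃ b v', v = b :: v' ∧ ¬ v' <+: b :: v' := by
  obtain ⟨-, -, hvt, hocc⟩ := isCompleteReturn_iff.1 hcr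
  cases v with
  | nil =>
    have := hocc 1 ⟨by simp only [length_nil] at hvt ⊢; omega, nil_prefix⟩
    simp only [length_nil] at this
    obtain ⟨d, rfl⟩ := length_eq_one_iff.1 (by omega : t.length = 1)
    exact absurd ⟨d, 1, Or.inl rfl⟩ ht
  | cons b v =>
    exact ⟨b, v, rfl, fun h =>
      ht ⟨b, v.length + 1, Or.inr ⟨by omega, cons_eq_replicate_of_prefix_cons h ▸ hcr⟩⟩⟩

end LetterPowers

def newClosedSuffixes (w : List α) (c : α) : Set (List α) :=
  {s | s <:+ w ++ [c] ∧ ClosedWord s ∧ ¬ s <:+: w}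

section AppendSingleton

variable {w : List α} {c : α}

/-- `v` is the longest suffix of `w ++ [c]` that occurs in `w`. -/
theorem exists_isCompleteReturn_drop_append_singleton (w : List α) (c : α) :
    ∃ v p, v <:+ w ++ [c] ∧ p + v.length < (w ++ [c]).length ∧
      IsCompleteReturn v ((w ++ [c]).drop p) ∧
      ∀ q, q + v.length < (w ++ [c]).length → ¬ (w ++ [c]).drop q <:+: w := by
  classical
  have hex : ∃ k, (w ++ [c]).drop k <:+: w := ⟨(w ++ [c]).length, by simp⟩
  have hvx := drop_suffix (Nat.find hex) (w ++ [c])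
  obtain ⟨i, hi⟩ := exists_occursAt_of_infix (Nat.find_spec hex)
  have := hi.1
  obtain ⟨p, -, hp, hcr⟩ := exists_isCompleteReturn_drop hvx (hi.append_right [c])
    (by rw [length_append, length_singleton]; omega)
  refine ⟨_, p, hvx, hp, hcr, fun q hq h => ?_⟩
  have := Nat.find_min' hex h
  simp only [length_drop] at hq
  omega

theorem OccursAt.add_length_eq_of_not_infix {s : List α} {i : ℕ} (h : OccursAt s (w ++ [c]) i)
    (hs : ¬ s <:+: w) : i + s.length = w.length + 1 := by
  have := h.1
  simp only [length_append, length_singleton] at this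
  by_contra hne
  exact hs (by simpa using h.infix_take (n := w.length) (by omega))

theorem closedFactors_append_singleton (w : List α) (c : α) :
    closedFactors (w ++ [c]) = closedFactors w ∪ newClosedSuffixes w c := by
  ext u
  simp only [closedFactors, newClosedSuffixes, Set.mem_union, Set.mem_ofPred_eq,
    isFactor_iff_infix, infix_concat_iff]
  by_cases h : u <:+: w <;> tauto

theorem closedFactors_finite (w : List α) : (closedFactors w).Finite :=
  w.sublists.finite_toSet.subset fun _ hu => mem_sublists.2 (isFactor_iff_infix.1 hu.1).sublist

theorem newClosedSuffixes_finite (w : List α) (c : α) : (newClosedSuffixes w c).Finite :=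
  (w ++ [c]).tails.finite_toSet.subset fun _ hs => (mem_tails _ _).2 hs.1

theorem ncard_closedFactors_append_singleton (w : List α) (c : α) :
    (closedFactors (w ++ [c])).ncard =
      (closedFactors w).ncard + (newClosedSuffixes w c).ncard := by
  rw [closedFactors_append_singleton]
  refine Set.ncard_union_eq ?_ (closedFactors_finite w) (newClosedSuffixes_finite w c)
  exact Set.disjoint_left.2 fun u hu hu' => hu'.2.2 (isFactor_iff_infix.1 hu.1)

theorem closedFactors_nil : closedFactors ([] : List α) = {[]} := by
  ext u
  simp only [closedFactors, Set.mem_ofPred_eq, Set.mem_singleton_iff, isFactor_iff_infix,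
    infix_nil]
  exact ⟨And.left, fun h => ⟨h, Or.inl h⟩⟩

theorem newClosedSuffixes_nonempty (w : List α) (c : α) : (newClosedSuffixes w c).Nonempty :=
  let ⟨_, p, _, hp, hcr, hnew⟩ := exists_isCompleteReturn_drop_append_singleton w c
  ⟨_, drop_suffix p _, hcr.closedWord, hnew p hp⟩

theorem newClosedSuffixes_subsingleton
    (h : ∀ s ∈ newClosedSuffixes w c, IsLetterPowerReturn s) :
    (newClosedSuffixes w c).Subsingleton := by
  suffices key : ∀ s ∈ newClosedSuffixes w c, ∀ t ∈ newClosedSuffixes w c,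
      s.length ≤ t.length → s = t by
    intro s hs t ht
    rcases le_total s.length t.length with hst | hts
    exacts [key s hs t ht hst, (key t ht s hs hts).symm]
  intro s hs t ht hst
  refine eq_of_suffix_of_forall_occursAt (h s hs) (h t ht)
    (suffix_of_suffix_length_le hs.1 ht.1 hst) fun i hi => ?_
  have htx := ht.1.length_le
  rw [suffix_iff_eq_drop.1 ht.1, occursAt_drop_iff (by omega)] at hi
  have := hi.add_length_eq_of_not_infix hs.2.2
  simp only [length_append, length_singleton] at this htx
  omega

theorem exists_mem_newClosedSuffixes_ne (w : List α) (c : α) {u : List α}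
    (hspec : ¬ IsLetterPowerReturn u) : ∃ s ∈ newClosedSuffixes w c, s ≠ u := by
  obtain ⟨v, p, hvx, hp, hcr, hnew⟩ := exists_isCompleteReturn_drop_append_singleton w c
  by_cases hpu : (w ++ [c]).drop p = u
  swap
  · exact ⟨_, ⟨drop_suffix p _, hcr.closedWord, hnew p hp⟩, hpu⟩
  subst hpu
  obtain ⟨b, v, rfl, hnpre⟩ := hcr.exists_eq_cons_not_prefix hspec
  obtain ⟨hvpre, -, hvu, -⟩ := isCompleteReturn_iff.1 hcr
  have hocc : OccursAt v (w ++ [c]) (p + 1) :=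
    OccursAt.tail ⟨by simp only [length_drop] at hvu; omega, hvpre⟩
  obtain ⟨q, hpq, hq, hcr'⟩ := exists_isCompleteReturn_drop ((suffix_cons b v).trans hvx) hocc
    (by simp only [length_cons] at hp; omega)
  -- The return to `v` cannot start where the suffix `b :: v` does: then `b :: v = b ^ n`.
  have hqv : q + (b :: v).length < (w ++ [c]).length := by
    by_contra hq'
    apply hnpre
    have : (w ++ [c]).drop q = b :: v := by
      rw [suffix_iff_eq_drop.1 hvx]
      simp only [length_cons] at hq hq' ⊢
      congr 1
      omega
    exact this ▸ (isCompleteReturn_iff.1 hcr').1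
  refine ⟨_, ⟨drop_suffix q _, hcr'.closedWord, hnew q hqv⟩, fun h => ?_⟩
  have := congrArg length h
  simp only [length_drop] at this hp
  omega

end AppendSingleton

theorem length_add_one_le_ncard_closedFactors (w : List α) :
    w.length + 1 ≤ (closedFactors w).ncard := by
  induction w using List.reverseRecOn with
  | nil => simp [closedFactors_nil]
  | append_singleton w c ih =>
    rw [ncard_closedFactors_append_singleton, length_append, length_singleton]
    have := (newClosedSuffixes_nonempty w c).ncard_pos (newClosedSuffixes_finite w c)
    omega

theorem ncard_closedFactors_of_forall {w : List α}
    (h : ∀ u ∈ closedFactors w, u ≠ [] → IsLetterPowerReturn u) :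
    (closedFactors w).ncard = w.length + 1 := by
  induction w using List.reverseRecOn with
  | nil => simp [closedFactors_nil]
  | append_singleton w c ih =>
    rw [closedFactors_append_singleton] at h
    have hnew : (newClosedSuffixes w c).ncard = 1 := by
      obtain ⟨s, hs⟩ := newClosedSuffixes_nonempty w c
      refine Set.ncard_eq_one.2 ⟨s, Set.Subsingleton.eq_singleton_of_mem ?_ hs⟩
      exact newClosedSuffixes_subsingleton fun t ht =>
        h t (Or.inr ht) fun h0 => ht.2.2 (h0 ▸ nil_infix)
    rw [ncard_closedFactors_append_singleton, hnew, ih fun u hu => h u (Or.inl hu),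
      length_append, length_singleton]

theorem length_add_two_le_ncard_closedFactors {w u : List α} (hu : u ∈ closedFactors w)
    (hne : u ≠ []) (hspec : ¬ IsLetterPowerReturn u) :
    w.length + 2 ≤ (closedFactors w).ncard := by
  induction w using List.reverseRecOn with
  | nil => exact absurd (by simpa [closedFactors_nil] using hu) hne
  | append_singleton w c ih =>
    rw [ncard_closedFactors_append_singleton, length_append, length_singleton]
    rw [closedFactors_append_singleton] at hu
    rcases hu with hu | hu
    · have := ih hu
      have := (newClosedSuffixes_nonempty w c).ncard_pos (newClosedSuffixes_finite w c)
      omega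
    · obtain ⟨s, hs, hsu⟩ := exists_mem_newClosedSuffixes_ne w c hspec
      have := (Set.one_lt_ncard (newClosedSuffixes_finite w c)).2 ⟨s, hs, u, hu, hsu⟩
      have := length_add_one_le_ncard_closedFactors w
      omega

/-- A word w is CR-poor iff every nonempty closed factor of w is a power of a
single letter or a complete return to a power of a single letter. -/
theorem stmt_14 {α : Type*} (w : List α) :
    IsCRPoor w ↔
      ∀ u : List α, IsFactor u w → ClosedWord u → u ≠ [] →
        ∃ (a : α) (n : ℕ), u = List.replicate n a ∨
          (0 < n ∧ IsCompleteReturn (List.replicate n a) u) := by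
  constructor
  · intro hpoor u hu hcl hne
    by_contra hspec
    have := length_add_two_le_ncard_closedFactors ⟨hu, hcl⟩ hne hspec
    rw [IsCRPoor] at hpoor
    omega
  · exact fun h => ncard_closedFactors_of_forall fun u hu => h u hu.1 hu.2
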